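/- Let V_i : ℂ^{d_i} → ℂ^{n_i} ⊗ ℂ^{k_i} (i = 1,2) be isometries defining quantum channels L_i(X) = [Tr_{n_i} ⊗ id_{k_i}](V_i X V_i*), and let L_1 ⊗ L_2 be the quantum channel defined by the isometry V_1 ⊗ V_2 : ℂ^{d_1} ⊗ ℂ^{d_2} → (ℂ^{n_1} ⊗ ℂ^{n_2}) ⊗ (ℂ^{k_1} ⊗ ℂ^{k_2}) (obtained from the Kronecker product after regrouping tensor factors). Then each of the five quantities B_C(L) = ‖C_L‖, B_{CΓ}(L) = ‖C_L^Γ‖, B_{CcΓ}(L) = ‖C_{L^c}^Γ‖, B_{MΓ}(L) = ‖(V V*)^Γ‖ and B_I(L) = ‖L(I)‖ is multiplicative: B(L_1 ⊗ L_2) = B(L_1) · B(L_2). -/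

import Mathlib

open scoped Kronecker ENNReal ComplexOrder
open Matrix Filter

noncomputable section

/-- A quantum state: a positive semidefinite matrix of trace 1. -/
def IsState {A : Type*} [Fintype A] (X : Matrix A A ℂ) : Prop :=
  X.PosSemidef ∧ X.trace = 1

/-- The Choi matrix of a linear map between matrix algebras. -/
def choiMatrix {A B : Type*} [Fintype A] [DecidableEq A]
    (L : Matrix A A ℂ →ₗ[ℂ] Matrix B B ℂ) : Matrix (B × A) (B × A) ℂ :=
  ∑ i : A, ∑ j : A, (L (Matrix.single i j 1)) ⊗ₖ (Matrix.single i j 1)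

/-- A quantum channel: a trace-preserving, completely positive linear map, the latter
meaning that its Choi matrix is positive semidefinite. -/
def IsChannel {A B : Type*} [Fintype A] [DecidableEq A] [Fintype B]
    (L : Matrix A A ℂ →ₗ[ℂ] Matrix B B ℂ) : Prop :=
  (∀ X, (L X).trace = X.trace) ∧ (choiMatrix L).PosSemidef

/-- The p-Rényi entropy of a (Hermitian) matrix, p ∈ [0,∞]. -/
def renyiEntropy {B : Type*} [Fintype B] [DecidableEq B] (p : ℝ≥0∞)
    (X : Matrix B B ℂ) : ℝ :=
  if h : X.IsHermitian then
    if p = 0 then Real.log (Nat.card {i // h.eigenvalues i ≠ 0})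
    else if p = 1 then -∑ i, h.eigenvalues i * Real.log (h.eigenvalues i)
    else if p = ⊤ then -Real.log (⨆ i, h.eigenvalues i)
    else (1 - p.toReal)⁻¹ * Real.log (∑ i, (h.eigenvalues i) ^ p.toReal)
  else 0

/-- The minimum output p-Rényi entropy of a channel. -/
def minOutputEntropy {A B : Type*} [Fintype A] [Fintype B] [DecidableEq B] (p : ℝ≥0∞)
    (L : Matrix A A ℂ →ₗ[ℂ] Matrix B B ℂ) : ℝ :=
  ⨅ X : {X : Matrix A A ℂ // IsState X}, renyiEntropy p (L X.1)

/-- The r-fold tensor power of a linear map between matrix algebras, determined by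
Kronecker products of matrix units. -/
def tensorPow {A B : Type*} [Fintype A] [DecidableEq A] [Fintype B]
    (L : Matrix A A ℂ →ₗ[ℂ] Matrix B B ℂ) (r : ℕ) :
    Matrix (Fin r → A) (Fin r → A) ℂ →ₗ[ℂ] Matrix (Fin r → B) (Fin r → B) ℂ where
  toFun X := Matrix.of fun i j => ∑ a : Fin r → A, ∑ b : Fin r → A,
      X a b * ∏ m, L (Matrix.single (a m) (b m) 1) (i m) (j m)
  map_add' X Y := by
    ext i j
    simp [Matrix.add_apply, add_mul, Finset.sum_add_distrib]
  map_smul' c X := by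
    ext i j
    simp [Matrix.smul_apply, smul_eq_mul, Finset.mul_sum, mul_assoc]

/-- The tensor product of two linear maps between matrix algebras, determined by
Kronecker products: (L ⊗ K)(X ⊗ Y) = L(X) ⊗ K(Y). -/
def channelTensor {A B C D : Type*} [Fintype A] [DecidableEq A] [Fintype B]
    [Fintype C] [DecidableEq C] [Fintype D]
    (L : Matrix A A ℂ →ₗ[ℂ] Matrix B B ℂ) (K : Matrix C C ℂ →ₗ[ℂ] Matrix D D ℂ) :
    Matrix (A × C) (A × C) ℂ →ₗ[ℂ] Matrix (B × D) (B × D) ℂ where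
  toFun X := Matrix.of fun i j => ∑ a : A × C, ∑ b : A × C,
      X a b * (L (Matrix.single a.1 b.1 1) i.1 j.1
        * K (Matrix.single a.2 b.2 1) i.2 j.2)
  map_add' X Y := by
    ext i j
    simp [Matrix.add_apply, add_mul, Finset.sum_add_distrib]
  map_smul' c X := by
    ext i j
    simp [Matrix.smul_apply, smul_eq_mul, Finset.mul_sum, mul_assoc]

/-- The p-additivity rate of a channel. -/
def additivityRate {A B : Type*} [Fintype A] [DecidableEq A] [Fintype B] [DecidableEq B]
    (p : ℝ≥0∞) (L : Matrix A A ℂ →ₗ[ℂ] Matrix B B ℂ) : ℝ :=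
  sSup {a : ℝ | a ∈ Set.Icc (0 : ℝ) 1 ∧
    a * minOutputEntropy p L ≤
      Filter.liminf (fun r : ℕ => minOutputEntropy p (tensorPow L r) / r) Filter.atTop}

/-- The operator norm (the norm induced by the ℓ² Euclidean norm) of a matrix. -/
def opNorm {A : Type*} [Fintype A] [DecidableEq A] (M : Matrix A A ℂ) : ℝ :=
  ‖Matrix.toEuclideanCLM (𝕜 := ℂ) M‖

/-- Partial trace over the first tensor factor. -/
def ptraceFst {N K : Type*} [Fintype N] (M : Matrix (N × K) (N × K) ℂ) : Matrix K K ℂ :=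
  Matrix.of fun i j => ∑ a : N, M (a, i) (a, j)

/-- Partial trace over the second tensor factor. -/
def ptraceSnd {N K : Type*} [Fintype K] (M : Matrix (N × K) (N × K) ℂ) : Matrix N N ℂ :=
  Matrix.of fun i j => ∑ b : K, M (i, b) (j, b)

/-- Partial transposition of the second tensor factor. -/
def ptranspose {B Q : Type*} (M : Matrix (B × Q) (B × Q) ℂ) : Matrix (B × Q) (B × Q) ℂ :=
  Matrix.of fun p q => M (p.1, q.2) (q.1, p.2)

/-- The quantum channel associated to an isometry V : ℂ^d → ℂ^n ⊗ ℂ^k,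
X ↦ [Tr_n ⊗ id_k](V X V*). -/
def channelOfIsometry {N K D : Type*} [Fintype N] [Fintype K] [Fintype D]
    (V : Matrix (N × K) D ℂ) : Matrix D D ℂ →ₗ[ℂ] Matrix K K ℂ where
  toFun X := ptraceFst (V * X * Vᴴ)
  map_add' X Y := by
    ext i j
    simp [ptraceFst, Matrix.mul_add, Matrix.add_mul, Finset.sum_add_distrib]
  map_smul' c X := by
    ext i j
    simp [ptraceFst, Matrix.mul_smul, Matrix.smul_mul, Finset.mul_sum]

/-- The complementary channel associated to an isometry V : ℂ^d → ℂ^n ⊗ ℂ^k,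
X ↦ [id_n ⊗ Tr_k](V X V*). -/
def compChannelOfIsometry {N K D : Type*} [Fintype N] [Fintype K] [Fintype D]
    (V : Matrix (N × K) D ℂ) : Matrix D D ℂ →ₗ[ℂ] Matrix N N ℂ where
  toFun X := ptraceSnd (V * X * Vᴴ)
  map_add' X Y := by
    ext i j
    simp [ptraceSnd, Matrix.mul_add, Matrix.add_mul, Finset.sum_add_distrib]
  map_smul' c X := by
    ext i j
    simp [ptraceSnd, Matrix.mul_smul, Matrix.smul_mul, Finset.mul_sum]

/-- The Kronecker product of two isometries, regrouped so that the environment factors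
come first and the output factors second. -/
def isometryTensor {N₁ K₁ D₁ N₂ K₂ D₂ : Type*}
    (V₁ : Matrix (N₁ × K₁) D₁ ℂ) (V₂ : Matrix (N₂ × K₂) D₂ ℂ) :
    Matrix ((N₁ × N₂) × (K₁ × K₂)) (D₁ × D₂) ℂ :=
  Matrix.of fun p c => V₁ (p.1.1, p.2.1) c.1 * V₂ (p.1.2, p.2.2) c.2

end

/-! After regrouping tensor factors, each of the five matrices attached to the channel of
`V₁ ⊗ V₂` is the Kronecker product of the corresponding matrices for `V₁` and `V₂`: the
isometry turns `X₁ ⊗ X₂` into `V₁ X₁ V₁* ⊗ V₂ X₂ V₂*`, and partial traces, partial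
transposes and Choi matrices all respect Kronecker products. It remains that the operator
norm is multiplicative on Kronecker products. Writing `A ⊗ B = (A ⊗ 1)(1 ⊗ B)` gives `≤`,
since `A ↦ A ⊗ 1` is a *-homomorphism of C*-algebras and hence contractive; testing
`A ⊗ B` on product vectors `x ⊗ y` gives `≥`. -/

section OperatorNormBound

variable {𝕜 E F G H : Type*} [NontriviallyNormedField 𝕜]
  [SeminormedAddCommGroup E] [SeminormedAddCommGroup F] [SeminormedAddCommGroup G]
  [SeminormedAddCommGroup H] [NormedSpace 𝕜 E] [NormedSpace 𝕜 F] [NormedSpace 𝕜 G]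
  [NormedSpace 𝕜 H]

lemma ContinuousLinearMap.mul_opNorm_le_of_forall_le {a b : ℝ} (ha : 0 ≤ a) (hb : 0 ≤ b)
    (S : E →L[𝕜] F) (h : ∀ y, a * ‖S y‖ ≤ b * ‖y‖) : a * ‖S‖ ≤ b := by
  rcases ha.eq_or_lt with rfl | ha
  · simpa using hb
  rw [← le_div_iff₀' ha]
  refine S.opNorm_le_bound (div_nonneg hb ha.le) fun y => ?_
  rw [div_mul_eq_mul_div, le_div_iff₀' ha]
  exact h y

lemma ContinuousLinearMap.opNorm_mul_opNorm_le_of_forall_le {c : ℝ} (hc : 0 ≤ c)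
    (T : E →L[𝕜] F) (S : G →L[𝕜] H) (h : ∀ x y, ‖T x‖ * ‖S y‖ ≤ c * ‖x‖ * ‖y‖) :
    ‖T‖ * ‖S‖ ≤ c := by
  have hS : ∀ x, ‖S‖ * ‖T x‖ ≤ c * ‖x‖ := fun x => by
    rw [mul_comm]
    exact S.mul_opNorm_le_of_forall_le (norm_nonneg _) (by positivity) (h x)
  rw [mul_comm]
  exact T.mul_opNorm_le_of_forall_le (norm_nonneg _) hc hS

end OperatorNormBound

section KroneckerOpNorm

open scoped Matrix.Norms.L2Operator

variable {I J : Type*} [Fintype I] [Fintype J]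

def tensorVec (x : EuclideanSpace ℂ I) (y : EuclideanSpace ℂ J) : EuclideanSpace ℂ (I × J) :=
  WithLp.toLp 2 fun p => x p.1 * y p.2

lemma norm_tensorVec (x : EuclideanSpace ℂ I) (y : EuclideanSpace ℂ J) :
    ‖tensorVec x y‖ = ‖x‖ * ‖y‖ := by
  rw [← sq_eq_sq₀ (norm_nonneg _) (by positivity), mul_pow, EuclideanSpace.norm_sq_eq,
    EuclideanSpace.norm_sq_eq, EuclideanSpace.norm_sq_eq, Fintype.sum_prod_type,
    Finset.sum_mul_sum]
  simp [tensorVec, mul_pow]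

variable [DecidableEq I] [DecidableEq J]

lemma toEuclideanCLM_kronecker_tensorVec (A : Matrix I I ℂ) (B : Matrix J J ℂ)
    (x : EuclideanSpace ℂ I) (y : EuclideanSpace ℂ J) :
    toEuclideanCLM (𝕜 := ℂ) (A ⊗ₖ B) (tensorVec x y) =
      tensorVec (toEuclideanCLM (𝕜 := ℂ) A x) (toEuclideanCLM (𝕜 := ℂ) B y) := by
  ext ⟨i, j⟩
  simp only [tensorVec, toEuclideanCLM_toLp, ofLp_toEuclideanCLM, mulVec, dotProduct,
    Fintype.sum_prod_type, Finset.sum_mul_sum, kroneckerMap_apply]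
  exact Finset.sum_congr rfl fun k _ => Finset.sum_congr rfl fun l _ => by ring

-- Under `Matrix.Norms.L2Operator`, `opNorm A` is definitionally the C*-norm `‖A‖`.
lemma opNorm_map_le (φ : Matrix I I ℂ →⋆ₐ[ℂ] Matrix J J ℂ) (A : Matrix I I ℂ) :
    opNorm (φ A) ≤ opNorm A :=
  NonUnitalStarAlgHom.norm_apply_le φ A

def reindexStarAlgEquiv (e : I ≃ J) : Matrix I I ℂ ≃⋆ₐ[ℂ] Matrix J J ℂ :=
  .ofAlgEquiv (reindexAlgEquiv ℂ ℂ e) fun A => conjTranspose_reindex e e A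

lemma opNorm_reindex (e : I ≃ J) (A : Matrix I I ℂ) : opNorm (reindex e e A) = opNorm A :=
  StarAlgEquiv.norm_map (reindexStarAlgEquiv e) A

def kroneckerOneStarAlgHom : Matrix I I ℂ →⋆ₐ[ℂ] Matrix (I × J) (I × J) ℂ where
  toFun A := A ⊗ₖ 1
  map_one' := one_kronecker_one
  map_mul' A B := by rw [← mul_kronecker_mul, one_mul]
  map_zero' := zero_kronecker _
  map_add' A B := add_kronecker A B 1
  commutes' r := by simp [Algebra.algebraMap_eq_smul_one, smul_kronecker]
  map_star' A := by simp [star_eq_conjTranspose, conjTranspose_kronecker]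

def oneKroneckerStarAlgHom : Matrix J J ℂ →⋆ₐ[ℂ] Matrix (I × J) (I × J) ℂ where
  toFun B := 1 ⊗ₖ B
  map_one' := one_kronecker_one
  map_mul' A B := by rw [← mul_kronecker_mul, one_mul]
  map_zero' := kronecker_zero _
  map_add' A B := kronecker_add 1 A B
  commutes' r := by simp [Algebra.algebraMap_eq_smul_one, kronecker_smul]
  map_star' A := by simp [star_eq_conjTranspose, conjTranspose_kronecker]

lemma opNorm_kronecker_le (A : Matrix I I ℂ) (B : Matrix J J ℂ) :
    opNorm (A ⊗ₖ B) ≤ opNorm A * opNorm B := by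
  have hAB : A ⊗ₖ B = (A ⊗ₖ (1 : Matrix J J ℂ)) * ((1 : Matrix I I ℂ) ⊗ₖ B) := by
    rw [← mul_kronecker_mul, mul_one, one_mul]
  calc opNorm (A ⊗ₖ B)
      ≤ opNorm (A ⊗ₖ (1 : Matrix J J ℂ)) * opNorm ((1 : Matrix I I ℂ) ⊗ₖ B) :=
        hAB ▸ l2_opNorm_mul _ _
    _ ≤ opNorm A * opNorm B :=
        mul_le_mul (opNorm_map_le kroneckerOneStarAlgHom A)
          (opNorm_map_le oneKroneckerStarAlgHom B) (norm_nonneg _) (norm_nonneg _)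

lemma le_opNorm_kronecker (A : Matrix I I ℂ) (B : Matrix J J ℂ) :
    opNorm A * opNorm B ≤ opNorm (A ⊗ₖ B) := by
  refine ContinuousLinearMap.opNorm_mul_opNorm_le_of_forall_le (norm_nonneg _) _ _
    fun x y => ?_
  have h := (toEuclideanCLM (𝕜 := ℂ) (A ⊗ₖ B)).le_opNorm (tensorVec x y)
  rwa [toEuclideanCLM_kronecker_tensorVec, norm_tensorVec, norm_tensorVec, ← mul_assoc] at h

lemma opNorm_kronecker (A : Matrix I I ℂ) (B : Matrix J J ℂ) :
    opNorm (A ⊗ₖ B) = opNorm A * opNorm B :=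
  (opNorm_kronecker_le A B).antisymm (le_opNorm_kronecker A B)

lemma opNorm_reindex_kronecker {P : Type*} [Fintype P] [DecidableEq P] (e : I × J ≃ P)
    (A : Matrix I I ℂ) (B : Matrix J J ℂ) :
    opNorm (reindex e e (A ⊗ₖ B)) = opNorm A * opNorm B := by
  rw [opNorm_reindex, opNorm_kronecker]

end KroneckerOpNorm

section TensorProductOfChannels

variable {N₁ K₁ D₁ N₂ K₂ D₂ : Type*}

lemma isometryTensor_eq_reindex_kronecker (V₁ : Matrix (N₁ × K₁) D₁ ℂ)
    (V₂ : Matrix (N₂ × K₂) D₂ ℂ) :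
    isometryTensor V₁ V₂ = reindex (Equiv.prodProdProdComm _ _ _ _) (Equiv.refl _) (V₁ ⊗ₖ V₂) :=
  rfl

lemma isometryTensor_mul_kronecker_mul_conjTranspose [Fintype D₁] [Fintype D₂]
    (V₁ : Matrix (N₁ × K₁) D₁ ℂ) (V₂ : Matrix (N₂ × K₂) D₂ ℂ)
    (X₁ : Matrix D₁ D₁ ℂ) (X₂ : Matrix D₂ D₂ ℂ) :
    isometryTensor V₁ V₂ * (X₁ ⊗ₖ X₂) * (isometryTensor V₁ V₂)ᴴ =
      reindex (Equiv.prodProdProdComm _ _ _ _) (Equiv.prodProdProdComm _ _ _ _)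
        ((V₁ * X₁ * V₁ᴴ) ⊗ₖ (V₂ * X₂ * V₂ᴴ)) := by
  rw [isometryTensor_eq_reindex_kronecker, conjTranspose_reindex, conjTranspose_kronecker,
    mul_kronecker_mul, mul_kronecker_mul]
  rfl

lemma isometryTensor_mul_conjTranspose [Fintype D₁] [DecidableEq D₁] [Fintype D₂]
    [DecidableEq D₂] (V₁ : Matrix (N₁ × K₁) D₁ ℂ) (V₂ : Matrix (N₂ × K₂) D₂ ℂ) :
    isometryTensor V₁ V₂ * (isometryTensor V₁ V₂)ᴴ =
      reindex (Equiv.prodProdProdComm _ _ _ _) (Equiv.prodProdProdComm _ _ _ _)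
        ((V₁ * V₁ᴴ) ⊗ₖ (V₂ * V₂ᴴ)) := by
  simpa using isometryTensor_mul_kronecker_mul_conjTranspose V₁ V₂ 1 1

lemma ptraceFst_reindex_kronecker [Fintype N₁] [Fintype N₂]
    (A : Matrix (N₁ × K₁) (N₁ × K₁) ℂ) (B : Matrix (N₂ × K₂) (N₂ × K₂) ℂ) :
    ptraceFst (reindex (Equiv.prodProdProdComm _ _ _ _) (Equiv.prodProdProdComm _ _ _ _)
      (A ⊗ₖ B)) = ptraceFst A ⊗ₖ ptraceFst B := by
  ext ⟨k₁, k₂⟩ ⟨l₁, l₂⟩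
  simp [ptraceFst, Fintype.sum_prod_type, Finset.sum_mul_sum]

lemma ptraceSnd_reindex_kronecker [Fintype K₁] [Fintype K₂]
    (A : Matrix (N₁ × K₁) (N₁ × K₁) ℂ) (B : Matrix (N₂ × K₂) (N₂ × K₂) ℂ) :
    ptraceSnd (reindex (Equiv.prodProdProdComm _ _ _ _) (Equiv.prodProdProdComm _ _ _ _)
      (A ⊗ₖ B)) = ptraceSnd A ⊗ₖ ptraceSnd B := by
  ext ⟨n₁, n₂⟩ ⟨m₁, m₂⟩
  simp [ptraceSnd, Fintype.sum_prod_type, Finset.sum_mul_sum]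

lemma ptranspose_reindex_kronecker (A : Matrix (N₁ × K₁) (N₁ × K₁) ℂ)
    (B : Matrix (N₂ × K₂) (N₂ × K₂) ℂ) :
    ptranspose (reindex (Equiv.prodProdProdComm _ _ _ _) (Equiv.prodProdProdComm _ _ _ _)
      (A ⊗ₖ B)) =
      reindex (Equiv.prodProdProdComm _ _ _ _) (Equiv.prodProdProdComm _ _ _ _)
        (ptranspose A ⊗ₖ ptranspose B) :=
  rfl

variable [Fintype N₁] [Fintype K₁] [Fintype D₁] [Fintype N₂] [Fintype K₂] [Fintype D₂]

lemma channelOfIsometry_isometryTensor_kronecker (V₁ : Matrix (N₁ × K₁) D₁ ℂ)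
    (V₂ : Matrix (N₂ × K₂) D₂ ℂ) (X₁ : Matrix D₁ D₁ ℂ) (X₂ : Matrix D₂ D₂ ℂ) :
    channelOfIsometry (isometryTensor V₁ V₂) (X₁ ⊗ₖ X₂) =
      channelOfIsometry V₁ X₁ ⊗ₖ channelOfIsometry V₂ X₂ :=
  (congrArg ptraceFst (isometryTensor_mul_kronecker_mul_conjTranspose V₁ V₂ X₁ X₂)).trans
    (ptraceFst_reindex_kronecker _ _)

lemma compChannelOfIsometry_isometryTensor_kronecker (V₁ : Matrix (N₁ × K₁) D₁ ℂ)
    (V₂ : Matrix (N₂ × K₂) D₂ ℂ) (X₁ : Matrix D₁ D₁ ℂ) (X₂ : Matrix D₂ D₂ ℂ) :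
    compChannelOfIsometry (isometryTensor V₁ V₂) (X₁ ⊗ₖ X₂) =
      compChannelOfIsometry V₁ X₁ ⊗ₖ compChannelOfIsometry V₂ X₂ :=
  (congrArg ptraceSnd (isometryTensor_mul_kronecker_mul_conjTranspose V₁ V₂ X₁ X₂)).trans
    (ptraceSnd_reindex_kronecker _ _)

end TensorProductOfChannels

lemma choiMatrix_apply {A B : Type*} [Fintype A] [DecidableEq A]
    (L : Matrix A A ℂ →ₗ[ℂ] Matrix B B ℂ) (k l : B) (d e : A) :
    choiMatrix L (k, d) (l, e) = L (single d e 1) k l := by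
  simp [choiMatrix, Matrix.sum_apply, kroneckerMap_apply, single, ite_and]

lemma choiMatrix_eq_reindex_kronecker {A₁ B₁ A₂ B₂ : Type*} [Fintype A₁] [DecidableEq A₁]
    [Fintype A₂] [DecidableEq A₂]
    {L : Matrix (A₁ × A₂) (A₁ × A₂) ℂ →ₗ[ℂ] Matrix (B₁ × B₂) (B₁ × B₂) ℂ}
    {L₁ : Matrix A₁ A₁ ℂ →ₗ[ℂ] Matrix B₁ B₁ ℂ} {L₂ : Matrix A₂ A₂ ℂ →ₗ[ℂ] Matrix B₂ B₂ ℂ}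
    (h : ∀ X₁ X₂, L (X₁ ⊗ₖ X₂) = L₁ X₁ ⊗ₖ L₂ X₂) :
    choiMatrix L = reindex (Equiv.prodProdProdComm _ _ _ _) (Equiv.prodProdProdComm _ _ _ _)
      (choiMatrix L₁ ⊗ₖ choiMatrix L₂) := by
  ext ⟨⟨k₁, k₂⟩, d₁, d₂⟩ ⟨⟨l₁, l₂⟩, e₁, e₂⟩
  rw [choiMatrix_apply, ← mul_one (1 : ℂ), ← single_kronecker_single, h]
  simp [choiMatrix_apply, kroneckerMap_apply]

theorem bounds_multiplicative {N₁ K₁ D₁ N₂ K₂ D₂ : Type*}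
    [Fintype N₁] [DecidableEq N₁] [Fintype K₁] [DecidableEq K₁]
    [Fintype D₁] [DecidableEq D₁]
    [Fintype N₂] [DecidableEq N₂] [Fintype K₂] [DecidableEq K₂]
    [Fintype D₂] [DecidableEq D₂]
    (V₁ : Matrix (N₁ × K₁) D₁ ℂ) (V₂ : Matrix (N₂ × K₂) D₂ ℂ) :
    opNorm (choiMatrix (channelOfIsometry (isometryTensor V₁ V₂))) =
        opNorm (choiMatrix (channelOfIsometry V₁)) *
          opNorm (choiMatrix (channelOfIsometry V₂)) ∧
    opNorm (ptranspose (choiMatrix (channelOfIsometry (isometryTensor V₁ V₂)))) =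
        opNorm (ptranspose (choiMatrix (channelOfIsometry V₁))) *
          opNorm (ptranspose (choiMatrix (channelOfIsometry V₂))) ∧
    opNorm (ptranspose (choiMatrix (compChannelOfIsometry (isometryTensor V₁ V₂)))) =
        opNorm (ptranspose (choiMatrix (compChannelOfIsometry V₁))) *
          opNorm (ptranspose (choiMatrix (compChannelOfIsometry V₂))) ∧
    opNorm (ptranspose (isometryTensor V₁ V₂ * (isometryTensor V₁ V₂)ᴴ)) =
        opNorm (ptranspose (V₁ * V₁ᴴ)) * opNorm (ptranspose (V₂ * V₂ᴴ)) ∧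
    opNorm (channelOfIsometry (isometryTensor V₁ V₂) 1) =
        opNorm (channelOfIsometry V₁ 1) * opNorm (channelOfIsometry V₂ 1) := by
  have hChoi := choiMatrix_eq_reindex_kronecker
    (channelOfIsometry_isometryTensor_kronecker V₁ V₂)
  have hChoiComp := choiMatrix_eq_reindex_kronecker
    (compChannelOfIsometry_isometryTensor_kronecker V₁ V₂)
  refine ⟨?_, ?_, ?_, ?_, ?_⟩
  · rw [hChoi, opNorm_reindex_kronecker]
  · rw [hChoi, ptranspose_reindex_kronecker, opNorm_reindex_kronecker]
  · rw [hChoiComp, ptranspose_reindex_kronecker, opNorm_reindex_kronecker]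
  · rw [isometryTensor_mul_conjTranspose, ptranspose_reindex_kronecker,
      opNorm_reindex_kronecker]
  · rw [← one_kronecker_one, channelOfIsometry_isometryTensor_kronecker, opNorm_kronecker]
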